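/- Let X₁, X₂ be independent exponential random variables with mean 1, let P₁, P₂, σ², N₁, N₂ > 0 and b₁, b₂ > 0, and set γ_k = X_k·P_k/σ² for k = 1,2. Then the two-round outage probability p_{out,2} = ℙ( N₁log₂(1+γ₁) < b₁ and N₁log₂(1+γ₁)+N₂log₂(1+γ₂) < b₁+b₂ ) equals e^{−(2^{b₂/N₂}−1)σ²/P₂} − e^{−(2^{(b₁+b₂)/N₂}−1)σ²/P₂} + (1 − e^{−(2^{b₁/N₁}−1)σ²/P₁})(1 − e^{−(2^{b₂/N₂}−1)σ²/P₂}) − φ, where φ = (σ²/P₂)·e^{σ²/P₁} · ∫_{2^{b₂/N₂}−1}^{2^{(b₁+b₂)/N₂}−1} exp(−(σ²/P₁)·2^{(b₁+b₂−N₂log₂(1+t))/N₁}) · e^{−(σ²/P₂)t} dt. -/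

import Mathlib

/-!
Condition on the second-round gain `X₂ = y`. The rate of a round is increasing in its gain, with
inverse `gainThreshold`, so given `y` the outage event is `X₁ < min q₁ (s y)`, where
`q₁ = gainThreshold N₁ P₁ σ2 b₁` and `s y = gainThreshold N₁ P₁ σ2 (b₁ + b₂ - rate N₂ P₂ σ2 y)`
decreases from `q₁` at `y = q₂` to `0` at `y = q₁₂`, the gains at which round 2 alone delivers
`b₂`, resp. `b₁ + b₂` bits. The conditional probability is therefore `1 - e^{-q₁}`,
`1 - e^{-s y}` or `0` on the three ranges of `y`; integrating against the `Exp(1)` law of `X₂`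
gives the three terms of the formula, and the substitution `y = (σ2 / P₂) t` turns the remaining
integral into `φ`.
-/

open MeasureTheory ProbabilityTheory Real Set

namespace MeasureTheory

variable {α β : Type*} [MeasurableSpace α] [MeasurableSpace β]

theorem Measure.measureReal_prod_apply_symm {μ : Measure α} {ν : Measure β} [IsFiniteMeasure μ]
    [SFinite ν] {s : Set (α × β)} (hs : MeasurableSet s) :
    (μ.prod ν).real s = ∫ y, μ.real ((·, y) ⁻¹' s) ∂ν := by
  rw [measureReal_def, prod_apply_symm hs, ← integral_toReal
    (measurable_measure_prodMk_right hs).aemeasurable (ae_of_all _ fun _ ↦ measure_lt_top _ _)]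
  rfl

theorem integral_eq_setIntegral_Iio_add_Ico_add_Ici [LinearOrder α] [TopologicalSpace α]
    [OrderClosedTopology α] [OpensMeasurableSpace α] {E : Type*} [NormedAddCommGroup E]
    [NormedSpace ℝ E] {ν : Measure α} {f : α → E}
    (hf : Integrable f ν) {a b : α} (hab : a ≤ b) :
    ∫ x, f x ∂ν = ∫ x in Iio a, f x ∂ν + ∫ x in Ico a b, f x ∂ν + ∫ x in Ici b, f x ∂ν := by
  rw [← setIntegral_univ, ← Iio_union_Ici (a := b),
    setIntegral_union (Iio_disjoint_Ici le_rfl) measurableSet_Ici hf.integrableOn hf.integrableOn,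
    ← Iio_union_Ico_eq_Iio hab,
    setIntegral_union ((Iio_disjoint_Ici le_rfl).mono_right Ico_subset_Ici_self) measurableSet_Ico
      hf.integrableOn hf.integrableOn]

end MeasureTheory

namespace ProbabilityTheory

variable {Ω α β : Type*} [MeasurableSpace Ω] [MeasurableSpace α] [MeasurableSpace β]

theorem IndepFun.measure_prodMk_preimage {μ : Measure Ω} {X : Ω → α} {Y : Ω → β}
    {ν₁ : Measure α} {ν₂ : Measure β} [SigmaFinite ν₁] [SigmaFinite ν₂]
    (hXY : IndepFun X Y μ) (hX : Measurable X) (hY : Measurable Y)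
    (hlawX : μ.map X = ν₁) (hlawY : μ.map Y = ν₂) {s : Set (α × β)} (hs : MeasurableSet s) :
    μ ((fun ω ↦ (X ω, Y ω)) ⁻¹' s) = ν₁.prod ν₂ s := by
  subst hlawX hlawY
  rw [← (indepFun_iff_map_prod_eq_prod_map_map' hX.aemeasurable hY.aemeasurable ‹_› ‹_›).mp hXY,
    Measure.map_apply (hX.prodMk hY) hs]

variable {r : ℝ}

theorem expMeasure_eq_withDensity (r : ℝ) :
    expMeasure r = volume.withDensity (exponentialPDF r) := rfl

-- For `a < 0` the right-hand side is `ofReal` of a negative number, hence `0`.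
theorem expMeasure_Iio (hr : 0 < r) (a : ℝ) :
    expMeasure r (Iio a) = ENNReal.ofReal (1 - exp (-(r * a))) := by
  rw [expMeasure_eq_withDensity, withDensity_apply _ measurableSet_Iio,
    setLIntegral_congr Iio_ae_eq_Iic, lintegral_exponentialPDF_eq_antiDeriv hr]
  split_ifs with ha
  · rfl
  rw [ENNReal.ofReal_zero, eq_comm, ENNReal.ofReal_eq_zero, sub_nonpos, one_le_exp_iff]
  nlinarith

theorem expMeasure_Iio_of_nonpos (hr : 0 < r) {a : ℝ} (ha : a ≤ 0) : expMeasure r (Iio a) = 0 := by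
  rw [expMeasure_Iio hr, ENNReal.ofReal_eq_zero, sub_nonpos, one_le_exp_iff]
  nlinarith

theorem expMeasure_real_Iio (hr : 0 < r) {a : ℝ} (ha : 0 ≤ a) :
    (expMeasure r).real (Iio a) = 1 - exp (-(r * a)) := by
  rw [measureReal_def, expMeasure_Iio hr,
    ENNReal.toReal_ofReal (sub_nonneg.2 (exp_le_one_iff.2 (by nlinarith)))]

theorem expMeasure_real_Ico (hr : 0 < r) {a b : ℝ} (ha : 0 ≤ a) (hab : a ≤ b) :
    (expMeasure r).real (Ico a b) = exp (-(r * a)) - exp (-(r * b)) := by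
  have : IsProbabilityMeasure (expMeasure r) := isProbabilityMeasure_expMeasure hr
  have hunion := measureReal_union (μ := expMeasure r) (s₁ := Iio a) (s₂ := Ico a b)
    ((Iio_disjoint_Ici le_rfl).mono_right Ico_subset_Ici_self) measurableSet_Ico
  rw [Iio_union_Ico_eq_Iio hab, expMeasure_real_Iio hr ha, expMeasure_real_Iio hr (ha.trans hab)]
    at hunion
  linarith

theorem ae_nonneg_expMeasure (hr : 0 < r) : ∀ᵐ x ∂expMeasure r, 0 ≤ x := by
  rw [ae_iff]
  simp only [not_le]
  exact expMeasure_Iio_of_nonpos hr le_rfl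

theorem setIntegral_expMeasure (hr : 0 < r) {s : Set ℝ} (hs : MeasurableSet s) (hs₀ : s ⊆ Ici 0)
    (g : ℝ → ℝ) : ∫ x in s, g x ∂expMeasure r = ∫ x in s, r * exp (-(r * x)) * g x := by
  rw [expMeasure_eq_withDensity, restrict_withDensity hs,
    integral_withDensity_eq_integral_toReal_smul (f := exponentialPDF r)
      (measurable_exponentialPDFReal r).ennreal_ofReal (ae_of_all _ fun _ ↦ ENNReal.ofReal_lt_top)]
  refine setIntegral_congr_fun hs fun x hx ↦ ?_
  rw [exponentialPDF_of_nonneg (hs₀ hx), ENNReal.toReal_ofReal (by positivity), smul_eq_mul]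

instance isProbabilityMeasure_expMeasure_one : IsProbabilityMeasure (expMeasure 1) :=
  isProbabilityMeasure_expMeasure one_pos

end ProbabilityTheory

namespace Harq

/-- `rate N P σ2 x` is the number of bits `N log₂ (1 + γ)` a round of length `N` and power `P`
delivers at channel gain `x`, i.e. at SNR `γ = x P / σ2`; `gainThreshold N P σ2 c` is the gain at
which it equals `c`. -/
noncomputable def rate (N P σ2 x : ℝ) : ℝ := N * logb 2 (1 + x * P / σ2)

noncomputable def gainThreshold (N P σ2 c : ℝ) : ℝ := (2 ^ (c / N) - 1) * σ2 / P

section SingleRound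

variable {N P σ2 : ℝ}

theorem measurable_rate : Measurable (rate N P σ2) := by
  unfold rate logb
  fun_prop

theorem rate_div_mul (hP : 0 < P) (hσ : 0 < σ2) (t : ℝ) :
    rate N P σ2 (σ2 / P * t) = N * logb 2 (1 + t) := by
  unfold rate
  field_simp

theorem gainThreshold_zero : gainThreshold N P σ2 0 = 0 := by
  simp [gainThreshold]

variable (hN : 0 < N) (hP : 0 < P) (hσ : 0 < σ2)
include hN hP hσ

theorem gainThreshold_monotone : Monotone (gainThreshold N P σ2) := by
  intro a b hab
  unfold gainThreshold
  gcongr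
  norm_num

theorem gainThreshold_nonneg {c : ℝ} (hc : 0 ≤ c) : 0 ≤ gainThreshold N P σ2 c :=
  gainThreshold_zero (N := N) (P := P) (σ2 := σ2) ▸ gainThreshold_monotone hN hP hσ hc

theorem gainThreshold_nonpos {c : ℝ} (hc : c ≤ 0) : gainThreshold N P σ2 c ≤ 0 :=
  gainThreshold_zero (N := N) (P := P) (σ2 := σ2) ▸ gainThreshold_monotone hN hP hσ hc

theorem rate_lt_iff {x : ℝ} (hx : 0 ≤ x) {c : ℝ} :
    rate N P σ2 x < c ↔ x < gainThreshold N P σ2 c := by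
  have h : 0 < 1 + x * P / σ2 := by positivity
  rw [rate, gainThreshold, mul_comm N, ← lt_div_iff₀ hN, logb_lt_iff_lt_rpow one_lt_two h,
    lt_div_iff₀ hP, ← div_lt_iff₀ hσ, ← lt_sub_iff_add_lt']

theorem le_rate_iff {x : ℝ} (hx : 0 ≤ x) {c : ℝ} :
    c ≤ rate N P σ2 x ↔ gainThreshold N P σ2 c ≤ x := by
  simpa only [not_lt] using (rate_lt_iff hN hP hσ hx).not

theorem expMeasure_rate_lt {r : ℝ} (hr : 0 < r) (c : ℝ) :
    expMeasure r {x | rate N P σ2 x < c} = expMeasure r (Iio (gainThreshold N P σ2 c)) :=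
  measure_congr <| Filter.eventuallyEq_set.mpr <|
    (ae_nonneg_expMeasure hr).mono fun _ hx ↦ rate_lt_iff hN hP hσ hx

end SingleRound

section TwoRounds

variable {N₁ N₂ P₁ P₂ σ2 b₁ b₂ : ℝ}

def outageRegion (N₁ N₂ P₁ P₂ σ2 b₁ b₂ : ℝ) : Set (ℝ × ℝ) :=
  {p | rate N₁ P₁ σ2 p.1 < b₁ ∧ rate N₁ P₁ σ2 p.1 + rate N₂ P₂ σ2 p.2 < b₁ + b₂}

noncomputable def condOutageProb (N₁ N₂ P₁ P₂ σ2 b₁ b₂ y : ℝ) : ℝ :=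
  (expMeasure 1).real ((·, y) ⁻¹' outageRegion N₁ N₂ P₁ P₂ σ2 b₁ b₂)

theorem measurableSet_outageRegion : MeasurableSet (outageRegion N₁ N₂ P₁ P₂ σ2 b₁ b₂) :=
  (measurableSet_lt (measurable_rate.comp measurable_fst) measurable_const).inter
    (measurableSet_lt ((measurable_rate.comp measurable_fst).add
      (measurable_rate.comp measurable_snd)) measurable_const)

theorem measureReal_outageRegion :
    ((expMeasure 1).prod (expMeasure 1)).real (outageRegion N₁ N₂ P₁ P₂ σ2 b₁ b₂)
      = ∫ y, condOutageProb N₁ N₂ P₁ P₂ σ2 b₁ b₂ y ∂expMeasure 1 :=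
  Measure.measureReal_prod_apply_symm measurableSet_outageRegion

theorem integrable_condOutageProb :
    Integrable (condOutageProb N₁ N₂ P₁ P₂ σ2 b₁ b₂) (expMeasure 1) := by
  refine .of_bound ?_ 1 (ae_of_all _ fun y ↦ ?_)
  · exact (measurable_measure_prodMk_right measurableSet_outageRegion).ennreal_toReal
      |>.aestronglyMeasurable
  · rw [condOutageProb, Real.norm_of_nonneg measureReal_nonneg]
    exact measureReal_le_one

theorem integral_exp_neg_mul_exp_neg_gainThreshold (hP₂ : 0 < P₂) (hσ : 0 < σ2) (c c₁ c₂ : ℝ) :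
    ∫ y in gainThreshold N₂ P₂ σ2 c₁..gainThreshold N₂ P₂ σ2 c₂,
        exp (-y) * exp (-gainThreshold N₁ P₁ σ2 (c - rate N₂ P₂ σ2 y))
      = σ2 / P₂ * exp (σ2 / P₁)
        * ∫ t in ((2 : ℝ) ^ (c₁ / N₂) - 1)..((2 : ℝ) ^ (c₂ / N₂) - 1),
            exp (-(σ2 / P₁) * (2 : ℝ) ^ ((c - N₂ * logb 2 (1 + t)) / N₁))
              * exp (-(σ2 / P₂) * t) := by
  have hk : σ2 / P₂ ≠ 0 := by positivity
  have hq (c : ℝ) : gainThreshold N₂ P₂ σ2 c = σ2 / P₂ * ((2 : ℝ) ^ (c / N₂) - 1) := by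
    rw [gainThreshold]
    ring
  rw [hq, hq, mul_assoc, ← intervalIntegral.integral_const_mul, ← inv_mul_eq_iff_eq_mul₀ hk,
    ← smul_eq_mul (σ2 / P₂)⁻¹, ← intervalIntegral.integral_comp_mul_left _ hk]
  refine intervalIntegral.integral_congr fun t _ ↦ ?_
  simp only [rate_div_mul hP₂ hσ, gainThreshold, ← exp_add]
  congr 1
  ring

variable (hN₁ : 0 < N₁) (hN₂ : 0 < N₂) (hP₁ : 0 < P₁) (hP₂ : 0 < P₂) (hσ : 0 < σ2)
include hN₁ hP₁ hσ

theorem condOutageProb_eq (y : ℝ) :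
    condOutageProb N₁ N₂ P₁ P₂ σ2 b₁ b₂ y
      = (expMeasure 1).real
          (Iio (gainThreshold N₁ P₁ σ2 (min b₁ (b₁ + b₂ - rate N₂ P₂ σ2 y)))) := by
  rw [condOutageProb, measureReal_def, measureReal_def,
    ← expMeasure_rate_lt hN₁ hP₁ hσ one_pos]
  congr 2
  ext x
  simp only [outageRegion, mem_preimage, mem_ofPred_eq, lt_min_iff, lt_sub_iff_add_lt]

include hN₂ hP₂

theorem condOutageProb_of_lt (hb₁ : 0 ≤ b₁) {y : ℝ} (hy₀ : 0 ≤ y)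
    (hy : y < gainThreshold N₂ P₂ σ2 b₂) :
    condOutageProb N₁ N₂ P₁ P₂ σ2 b₁ b₂ y = 1 - exp (-gainThreshold N₁ P₁ σ2 b₁) := by
  have hrate := (rate_lt_iff hN₂ hP₂ hσ hy₀).mpr hy
  rw [condOutageProb_eq hN₁ hP₁ hσ, min_eq_left (by linarith),
    expMeasure_real_Iio one_pos (gainThreshold_nonneg hN₁ hP₁ hσ hb₁), one_mul]

theorem condOutageProb_of_mem_Ico {y : ℝ} (hy₀ : 0 ≤ y)
    (hy : y ∈ Ico (gainThreshold N₂ P₂ σ2 b₂) (gainThreshold N₂ P₂ σ2 (b₁ + b₂))) :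
    condOutageProb N₁ N₂ P₁ P₂ σ2 b₁ b₂ y
      = 1 - exp (-gainThreshold N₁ P₁ σ2 (b₁ + b₂ - rate N₂ P₂ σ2 y)) := by
  have hlo := (le_rate_iff hN₂ hP₂ hσ hy₀).mpr hy.1
  have hhi := (rate_lt_iff hN₂ hP₂ hσ hy₀).mpr hy.2
  rw [condOutageProb_eq hN₁ hP₁ hσ, min_eq_right (by linarith),
    expMeasure_real_Iio one_pos (gainThreshold_nonneg hN₁ hP₁ hσ (by linarith)), one_mul]

theorem condOutageProb_of_le {y : ℝ} (hy₀ : 0 ≤ y) (hy : gainThreshold N₂ P₂ σ2 (b₁ + b₂) ≤ y) :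
    condOutageProb N₁ N₂ P₁ P₂ σ2 b₁ b₂ y = 0 := by
  have hrate := (le_rate_iff hN₂ hP₂ hσ hy₀).mpr hy
  rw [condOutageProb_eq hN₁ hP₁ hσ, measureReal_def,
    expMeasure_Iio_of_nonpos one_pos
      (gainThreshold_nonpos hN₁ hP₁ hσ ((min_le_right _ _).trans (by linarith))),
    ENNReal.toReal_zero]

theorem setIntegral_Iio_condOutageProb (hb₁ : 0 ≤ b₁) (hb₂ : 0 ≤ b₂) :
    ∫ y in Iio (gainThreshold N₂ P₂ σ2 b₂), condOutageProb N₁ N₂ P₁ P₂ σ2 b₁ b₂ y ∂expMeasure 1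
      = (1 - exp (-gainThreshold N₁ P₁ σ2 b₁)) * (1 - exp (-gainThreshold N₂ P₂ σ2 b₂)) := by
  rw [setIntegral_congr_ae measurableSet_Iio (g := fun _ ↦ 1 - exp (-gainThreshold N₁ P₁ σ2 b₁)),
    setIntegral_const, expMeasure_real_Iio one_pos (gainThreshold_nonneg hN₂ hP₂ hσ hb₂),
    one_mul, smul_eq_mul, mul_comm]
  filter_upwards [ae_nonneg_expMeasure one_pos] with y hy₀ hy
  exact condOutageProb_of_lt hN₁ hN₂ hP₁ hP₂ hσ hb₁ hy₀ hy

theorem setIntegral_Ico_condOutageProb (hb₁ : 0 ≤ b₁) (hb₂ : 0 ≤ b₂) :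
    ∫ y in Ico (gainThreshold N₂ P₂ σ2 b₂) (gainThreshold N₂ P₂ σ2 (b₁ + b₂)),
        condOutageProb N₁ N₂ P₁ P₂ σ2 b₁ b₂ y ∂expMeasure 1
      = exp (-gainThreshold N₂ P₂ σ2 b₂) - exp (-gainThreshold N₂ P₂ σ2 (b₁ + b₂))
        - ∫ y in gainThreshold N₂ P₂ σ2 b₂..gainThreshold N₂ P₂ σ2 (b₁ + b₂),
            exp (-y) * exp (-gainThreshold N₁ P₁ σ2 (b₁ + b₂ - rate N₂ P₂ σ2 y)) := by
  have hint : Integrable (condOutageProb N₁ N₂ P₁ P₂ σ2 b₁ b₂) (expMeasure 1) :=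
    integrable_condOutageProb
  have hq₂ : 0 ≤ gainThreshold N₂ P₂ σ2 b₂ := gainThreshold_nonneg hN₂ hP₂ hσ hb₂
  have hq : gainThreshold N₂ P₂ σ2 b₂ ≤ gainThreshold N₂ P₂ σ2 (b₁ + b₂) :=
    gainThreshold_monotone hN₂ hP₂ hσ (by linarith)
  set q₂ := gainThreshold N₂ P₂ σ2 b₂
  set q₁₂ := gainThreshold N₂ P₂ σ2 (b₁ + b₂)
  set s := fun y ↦ gainThreshold N₁ P₁ σ2 (b₁ + b₂ - rate N₂ P₂ σ2 y)
  have hI₀ : Ico q₂ q₁₂ ⊆ Ici 0 := fun _ hy ↦ hq₂.trans hy.1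
  have hf : EqOn (condOutageProb N₁ N₂ P₁ P₂ σ2 b₁ b₂) (fun y ↦ 1 - exp (-s y)) (Ico q₂ q₁₂) :=
    fun y hy ↦ condOutageProb_of_mem_Ico hN₁ hN₂ hP₁ hP₂ hσ (hI₀ hy) hy
  have hg : IntegrableOn (fun y ↦ exp (-s y)) (Ico q₂ q₁₂) (expMeasure 1) :=
    ((integrable_const 1).sub hint).integrableOn.congr_fun
      (fun y hy ↦ by simp only [Pi.sub_apply, hf hy, sub_sub_cancel]) measurableSet_Ico
  rw [setIntegral_congr_fun measurableSet_Ico hf,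
    integral_sub (integrable_const 1).integrableOn hg, setIntegral_const, smul_eq_mul, mul_one,
    expMeasure_real_Ico one_pos hq₂ hq, one_mul, one_mul,
    setIntegral_expMeasure one_pos measurableSet_Ico hI₀, integral_Ico_eq_integral_Ioo,
    ← integral_Ioc_eq_integral_Ioo, ← intervalIntegral.integral_of_le hq]
  simp only [one_mul, s]

theorem setIntegral_Ici_condOutageProb (hb : 0 ≤ b₁ + b₂) :
    ∫ y in Ici (gainThreshold N₂ P₂ σ2 (b₁ + b₂)),
        condOutageProb N₁ N₂ P₁ P₂ σ2 b₁ b₂ y ∂expMeasure 1 = 0 :=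
  setIntegral_eq_zero_of_forall_eq_zero fun _ hy ↦ condOutageProb_of_le hN₁ hN₂ hP₁ hP₂ hσ
    ((gainThreshold_nonneg hN₂ hP₂ hσ hb).trans hy) hy

end TwoRounds

end Harq

open Harq

theorem outage_prob_two_rounds
    {Ω : Type*} [MeasurableSpace Ω] (μ : Measure Ω)
    (X₁ X₂ : Ω → ℝ) (hX₁ : Measurable X₁) (hX₂ : Measurable X₂)
    (hindep : IndepFun X₁ X₂ μ)
    (hlaw₁ : μ.map X₁ = expMeasure 1) (hlaw₂ : μ.map X₂ = expMeasure 1)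
    (P₁ P₂ σ2 N₁ N₂ b₁ b₂ : ℝ)
    (hP₁ : 0 < P₁) (hP₂ : 0 < P₂) (hσ : 0 < σ2)
    (hN₁ : 0 < N₁) (hN₂ : 0 < N₂) (hb₁ : 0 < b₁) (hb₂ : 0 < b₂) :
    (μ {ω | N₁ * logb 2 (1 + X₁ ω * P₁ / σ2) < b₁ ∧
        N₁ * logb 2 (1 + X₁ ω * P₁ / σ2) + N₂ * logb 2 (1 + X₂ ω * P₂ / σ2)
          < b₁ + b₂}).toReal
      = Real.exp (-((2 : ℝ) ^ (b₂ / N₂) - 1) * σ2 / P₂)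
        - Real.exp (-((2 : ℝ) ^ ((b₁ + b₂) / N₂) - 1) * σ2 / P₂)
        + (1 - Real.exp (-((2 : ℝ) ^ (b₁ / N₁) - 1) * σ2 / P₁))
          * (1 - Real.exp (-((2 : ℝ) ^ (b₂ / N₂) - 1) * σ2 / P₂))
        - (σ2 / P₂) * Real.exp (σ2 / P₁)
          * ∫ t in ((2 : ℝ) ^ (b₂ / N₂) - 1)..((2 : ℝ) ^ ((b₁ + b₂) / N₂) - 1),
              Real.exp (-(σ2 / P₁) * (2 : ℝ) ^ ((b₁ + b₂ - N₂ * logb 2 (1 + t)) / N₁))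
                * Real.exp (-(σ2 / P₂) * t) := by
  change (μ ((fun ω ↦ (X₁ ω, X₂ ω)) ⁻¹' outageRegion N₁ N₂ P₁ P₂ σ2 b₁ b₂)).toReal = _
  rw [hindep.measure_prodMk_preimage hX₁ hX₂ hlaw₁ hlaw₂ measurableSet_outageRegion,
    ← measureReal_def, measureReal_outageRegion,
    integral_eq_setIntegral_Iio_add_Ico_add_Ici integrable_condOutageProb
      (gainThreshold_monotone hN₂ hP₂ hσ (by linarith : b₂ ≤ b₁ + b₂)),
    setIntegral_Iio_condOutageProb hN₁ hN₂ hP₁ hP₂ hσ hb₁.le hb₂.le,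
    setIntegral_Ico_condOutageProb hN₁ hN₂ hP₁ hP₂ hσ hb₁.le hb₂.le,
    setIntegral_Ici_condOutageProb hN₁ hN₂ hP₁ hP₂ hσ (by linarith),
    integral_exp_neg_mul_exp_neg_gainThreshold hP₂ hσ]
  simp only [gainThreshold, neg_mul, neg_div]
  ring
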